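/- arXiv:2107.07071 — 2 statements merged into one kernel-verified Lean document; each statement's English description precedes it below -/
import Mathlib

section
/- For all n : ℕ and all v = (a|b), v' = (a'|b') in (F₂×F₂)ⁿ, the Pauli matrices satisfy the commutation relation E(a|b) · E(a'|b') = (-1)^{⟨v,v'⟩} E(a'|b') · E(a|b), where ⟨v,v'⟩ = a·b' + a'·b is the symplectic inner product computed in F₂ (lifted to an integer exponent 0 or 1). In particular, E(a|b) and E(a'|b') commute if ⟨v,v'⟩ = 0 and anticommute if ⟨v,v'⟩ = 1. -/
open Matrix

/-- The Pauli matrix `E(v)` for `v = (a|b) ∈ (F₂×F₂)ⁿ`: the `2ⁿ × 2ⁿ` complex matrix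
with `(x, y)` entry `(-1)^{b·y}` if `x = y + a` and `0` otherwise. -/
def PauliV {n : ℕ} (v : Fin n → ZMod 2 × ZMod 2) :
    Matrix (Fin n → ZMod 2) (Fin n → ZMod 2) ℂ :=
  Matrix.of fun x y =>
    if x = y + (fun k => (v k).1) then (-1 : ℂ) ^ (∑ k, ((v k).2 * y k).val) else 0

/-- The symplectic inner product `⟨v,v'⟩ = Σ_k (a_k b'_k + a'_k b_k) ∈ F₂`. -/
def sympl {n : ℕ} (v v' : Fin n → ZMod 2 × ZMod 2) : ZMod 2 :=
  ∑ k, ((v k).1 * (v' k).2 + (v' k).1 * (v k).2)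

/-
Both products `E(v) E(v')` and `E(v') E(v)` shift by `a + a'`; at the entry `(y + a + a', y)`
their signs are `(-1)^{b·(y + a') + b'·y}` and `(-1)^{b'·(y + a) + b·y}`, whose exponents differ
in `F₂` by `a·b' + a'·b = ⟨v,v'⟩`.
-/

lemma neg_one_pow_eq_of_natCast_eq {R : Type*} [Monoid R] [HasDistribNeg R] {m m' : ℕ}
    (h : (m : ZMod 2) = m') : (-1 : R) ^ m = (-1) ^ m' :=
  neg_one_pow_congr <| by rw [← ZMod.natCast_eq_zero_iff_even, ← ZMod.natCast_eq_zero_iff_even, h]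

lemma PauliV_mul_PauliV_apply {n : ℕ} (v v' : Fin n → ZMod 2 × ZMod 2)
    (x y : Fin n → ZMod 2) :
    (PauliV v * PauliV v') x y =
      if x = y + (fun k => (v' k).1) + (fun k => (v k).1) then
        (-1 : ℂ) ^ (∑ k, ((v k).2 * (y k + (v' k).1)).val + ∑ k, ((v' k).2 * y k).val)
      else 0 := by
  rw [mul_apply, Finset.sum_eq_single (y + fun k => (v' k).1)]
  · simp [PauliV, ite_mul, pow_add]
  · intro z _ hz
    simp [PauliV, hz]
  · simp

lemma pauli_phase_eq_sympl_add {n : ℕ} (v v' : Fin n → ZMod 2 × ZMod 2) (y : Fin n → ZMod 2) :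
    ((∑ k, ((v k).2 * (y k + (v' k).1)).val + ∑ k, ((v' k).2 * y k).val : ℕ) : ZMod 2) =
      ((sympl v v').val + (∑ k, ((v' k).2 * (y k + (v k).1)).val +
        ∑ k, ((v k).2 * y k).val) : ℕ) := by
  push_cast
  simp only [ZMod.natCast_val, ZMod.cast_id', id_eq, sympl, ← Finset.sum_add_distrib]
  refine Finset.sum_congr rfl fun k _ => ?_
  grind

lemma PauliV_mul_comm_smul {n : ℕ} (v v' : Fin n → ZMod 2 × ZMod 2) :
    PauliV v * PauliV v' = (-1 : ℂ) ^ (sympl v v').val • (PauliV v' * PauliV v) := by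
  ext x y
  rw [Matrix.smul_apply, PauliV_mul_PauliV_apply, PauliV_mul_PauliV_apply, add_right_comm y]
  split_ifs
  · rw [smul_eq_mul, ← pow_add]
    exact neg_one_pow_eq_of_natCast_eq (pauli_phase_eq_sympl_add v v' y)
  · rw [smul_zero]

/-- Commutation relation for Pauli matrices:
`E(v) · E(v') = (-1)^{⟨v,v'⟩} E(v') · E(v)`; in particular they commute when
`⟨v,v'⟩ = 0` and anticommute when `⟨v,v'⟩ = 1`. -/
theorem pauli_comm_relation {n : ℕ} (v v' : Fin n → ZMod 2 × ZMod 2) :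
    PauliV v * PauliV v' = (-1 : ℂ) ^ (sympl v v').val • (PauliV v' * PauliV v) ∧
    (sympl v v' = 0 → PauliV v * PauliV v' = PauliV v' * PauliV v) ∧
    (sympl v v' = 1 → PauliV v * PauliV v' = -(PauliV v' * PauliV v)) := by
  refine ⟨PauliV_mul_comm_smul v v', fun h => ?_, fun h => ?_⟩
  · rw [PauliV_mul_comm_smul, h, ZMod.val_zero, pow_zero, one_smul]
  · rw [PauliV_mul_comm_smul, h, ZMod.val_one, pow_one, neg_one_smul]
end

section
/- Let n : ℕ, let S be a Lagrangian F₂-subspace of V = (F₂×F₂)ⁿ (isotropic for the symplectic form and of dimension n), let φ ∈ ℂ^{F₂ⁿ} be a nonzero vector, and suppose there is a function ε : S → ℂ such that E(s)·φ = ε(s)·φ for every s ∈ S. Then for every v ∈ V with v ∉ S, the expectation ⟨φ, E(v)·φ⟩ = Σ_x conj(φ_x)·(E(v)·φ)_x equals 0. -/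
open Matrix

/-! Since `S` is Lagrangian it is its own symplectic complement, so some `s ∈ S` has
`⟨s, v⟩ = 1`, i.e. `E(s)` anticommutes with `E(v)`. As `E(s)` is unitary, its eigenvalue on `φ`
has modulus one, and then `⟨φ, E(v)φ⟩ = ⟨E(s)φ, E(s)E(v)φ⟩ = -⟨φ, E(v)φ⟩`. -/

open scoped ComplexOrder

section Anticommute

variable {ι 𝕜 : Type*} [Fintype ι] [DecidableEq ι] [RCLike 𝕜]

theorem star_mulVec_dotProduct_mulVec {U : Matrix ι ι 𝕜} (hU : Uᴴ * U = 1)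
    (x y : ι → 𝕜) : star (U *ᵥ x) ⬝ᵥ (U *ᵥ y) = star x ⬝ᵥ y := by
  rw [star_mulVec, dotProduct_mulVec, vecMul_vecMul, hU, vecMul_one]

theorem star_dotProduct_mulVec_eq_zero_of_anticommute {U A : Matrix ι ι 𝕜}
    (hU : Uᴴ * U = 1) (hUA : U * A = -(A * U)) {φ : ι → 𝕜} (hφ : φ ≠ 0) {e : 𝕜}
    (he : U *ᵥ φ = e • φ) : star φ ⬝ᵥ (A *ᵥ φ) = 0 := by
  have hnorm : star e * e = 1 := by
    have h := star_mulVec_dotProduct_mulVec hU φ φ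
    rw [he, star_smul, smul_dotProduct, dotProduct_smul, smul_smul, smul_eq_mul] at h
    exact mul_right_cancel₀ (dotProduct_star_self_eq_zero.not.2 hφ) (h.trans (one_mul _).symm)
  have h := star_mulVec_dotProduct_mulVec hU φ (A *ᵥ φ)
  rw [mulVec_mulVec, hUA, neg_mulVec, ← mulVec_mulVec, he, mulVec_smul, star_smul,
    smul_dotProduct, dotProduct_neg, dotProduct_smul, smul_neg, smul_smul, smul_eq_mul, hnorm,
    one_mul] at h
  linear_combination -h / 2

end Anticommute

theorem LinearMap.BilinForm.orthogonal_eq_self_of_le {K V : Type*} [Field K] [AddCommGroup V]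
    [Module K V] [FiniteDimensional K V] {B : LinearMap.BilinForm K V} (hB : B.Nondegenerate)
    {S : Submodule K V} (hS : S ≤ B.orthogonal S)
    (hdim : 2 * Module.finrank K S = Module.finrank K V) : B.orthogonal S = S :=
  (Submodule.eq_of_le_of_finrank_le hS (by rw [finrank_orthogonal hB]; omega)).symm

namespace Pauli

def signChar : AddChar (ZMod 2) ℂ where
  toFun z := (-1) ^ z.val
  map_zero_eq_one' := by simp
  map_add_eq_mul' a b := by
    rw [ZMod.val_add, ← neg_one_pow_eq_pow_mod_two, pow_add]

lemma signChar_one : signChar 1 = -1 := by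
  simp [signChar, ZMod.val_one]

lemma signChar_sum {ι : Type*} (s : Finset ι) (f : ι → ZMod 2) :
    signChar (∑ i ∈ s, f i) = ∏ i ∈ s, signChar (f i) := by
  simpa [← ofAdd_sum] using map_prod signChar.toMonoidHom (Multiplicative.ofAdd ∘ f) s

lemma star_signChar (z : ZMod 2) : star (signChar z) = signChar z := by
  simp [signChar]

lemma signChar_mul_self (z : ZMod 2) : signChar z * signChar z = 1 := by
  rw [← AddChar.map_add_eq_mul, CharTwo.add_self_eq_zero, AddChar.map_zero_eq_one]

variable {n : ℕ}

def xPart (v : Fin n → ZMod 2 × ZMod 2) : Fin n → ZMod 2 := fun k => (v k).1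

def zPart (v : Fin n → ZMod 2 × ZMod 2) : Fin n → ZMod 2 := fun k => (v k).2

@[simp] lemma xPart_add (u w : Fin n → ZMod 2 × ZMod 2) :
    xPart (u + w) = xPart u + xPart w := rfl

@[simp] lemma zPart_add (u w : Fin n → ZMod 2 × ZMod 2) :
    zPart (u + w) = zPart u + zPart w := rfl

@[simp] lemma xPart_smul (c : ZMod 2) (u : Fin n → ZMod 2 × ZMod 2) :
    xPart (c • u) = c • xPart u := rfl

@[simp] lemma zPart_smul (c : ZMod 2) (u : Fin n → ZMod 2 × ZMod 2) :
    zPart (c • u) = c • zPart u := rfl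

lemma sympl_eq_dotProduct (u w : Fin n → ZMod 2 × ZMod 2) :
    sympl u w = xPart u ⬝ᵥ zPart w + xPart w ⬝ᵥ zPart u :=
  Finset.sum_add_distrib

lemma sympl_comm (u w : Fin n → ZMod 2 × ZMod 2) : sympl u w = sympl w u := by
  rw [sympl_eq_dotProduct, sympl_eq_dotProduct, add_comm]

lemma pauliV_apply (v : Fin n → ZMod 2 × ZMod 2) (x y : Fin n → ZMod 2) :
    PauliV v x y = if x = y + xPart v then signChar (zPart v ⬝ᵥ y) else 0 := by
  simp only [PauliV, of_apply, dotProduct, signChar_sum, ← Finset.prod_pow_eq_pow_sum]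
  rfl

lemma pauliV_mul_pauliV (u w : Fin n → ZMod 2 × ZMod 2) :
    PauliV u * PauliV w = signChar (zPart u ⬝ᵥ xPart w) • PauliV (u + w) := by
  ext x z
  simp only [mul_apply, pauliV_apply, mul_ite, mul_zero, Finset.sum_ite_eq', Finset.mem_univ,
    if_true, Matrix.smul_apply, smul_eq_mul, ite_mul, zero_mul]
  simp only [xPart_add, zPart_add, add_assoc, add_comm (xPart w), dotProduct_add, add_dotProduct,
    AddChar.map_add_eq_mul]
  split_ifs
  · ring
  · rfl

lemma pauliV_mul_pauliV_comm (u w : Fin n → ZMod 2 × ZMod 2) :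
    PauliV u * PauliV w = signChar (sympl u w) • (PauliV w * PauliV u) := by
  have hsign : sympl u w + zPart w ⬝ᵥ xPart u = zPart u ⬝ᵥ xPart w := by
    rw [sympl_eq_dotProduct, dotProduct_comm (zPart w), dotProduct_comm (xPart w),
      add_right_comm, CharTwo.add_self_eq_zero, zero_add]
  rw [pauliV_mul_pauliV, pauliV_mul_pauliV, smul_smul, ← AddChar.map_add_eq_mul, hsign, add_comm]

lemma conjTranspose_pauliV_mul_self (v : Fin n → ZMod 2 × ZMod 2) :
    (PauliV v)ᴴ * PauliV v = 1 := by
  ext x z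
  simp only [mul_apply, conjTranspose_apply, pauliV_apply, apply_ite star, star_zero, ite_mul,
    zero_mul, Finset.sum_ite_eq', Finset.mem_univ, if_true, add_left_inj, one_apply]
  split_ifs with hxz
  · rw [hxz, star_signChar, signChar_mul_self]
  · rw [mul_zero]

variable (n) in
def symplecticForm : LinearMap.BilinForm (ZMod 2) (Fin n → ZMod 2 × ZMod 2) := by
  refine LinearMap.mk₂ (ZMod 2) sympl ?_ ?_ ?_ ?_ <;> intros <;>
    simp only [sympl_eq_dotProduct, xPart_add, zPart_add, xPart_smul, zPart_smul, add_dotProduct,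
      dotProduct_add, smul_dotProduct, dotProduct_smul, smul_eq_mul] <;> ring

lemma sympl_single_zero_one (v : Fin n → ZMod 2 × ZMod 2) (k : Fin n) :
    sympl v (Pi.single k (0, 1)) = (v k).1 := by
  simp [sympl, Pi.single_apply, apply_ite Prod.fst, apply_ite Prod.snd]

lemma sympl_single_one_zero (v : Fin n → ZMod 2 × ZMod 2) (k : Fin n) :
    sympl v (Pi.single k (1, 0)) = (v k).2 := by
  simp [sympl, Pi.single_apply, apply_ite Prod.fst, apply_ite Prod.snd]

lemma symplecticForm_nondegenerate : (symplecticForm n).Nondegenerate := by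
  have hrefl : (symplecticForm n).IsRefl := fun u w huw => (sympl_comm w u).trans huw
  refine hrefl.nondegenerate_iff_separatingLeft.2 fun v hv => funext fun k => Prod.ext ?_ ?_
  · exact (sympl_single_zero_one v k).symm.trans (hv _)
  · exact (sympl_single_one_zero v k).symm.trans (hv _)

theorem exists_sympl_eq_one_of_not_mem (S : Submodule (ZMod 2) (Fin n → ZMod 2 × ZMod 2))
    (hiso : ∀ s ∈ S, ∀ s' ∈ S, sympl s s' = 0) (hdim : Module.finrank (ZMod 2) S = n)
    {v : Fin n → ZMod 2 × ZMod 2} (hv : v ∉ S) : ∃ s ∈ S, sympl s v = 1 := by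
  have hS : (symplecticForm n).orthogonal S = S := by
    refine LinearMap.BilinForm.orthogonal_eq_self_of_le symplecticForm_nondegenerate
      (fun w hw s hs => hiso s hs w hw) ?_
    simp [hdim, Module.finrank_pi_fintype, Module.finrank_prod, mul_comm]
  by_contra! h
  refine hv (hS ▸ fun s hs => ?_)
  have hne := h s hs
  change sympl s v = 0
  generalize sympl s v = t at hne
  revert t
  decide

end Pauli

open Pauli

/-- If `S` is Lagrangian, `φ ≠ 0` is a joint eigenvector of all `E(s)`, `s ∈ S`, then
`⟨φ, E(v)·φ⟩ = 0` for every `v ∉ S`. -/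
theorem expectation_eq_zero_of_not_mem {n : ℕ}
    (S : Submodule (ZMod 2) (Fin n → ZMod 2 × ZMod 2))
    (hiso : ∀ s ∈ S, ∀ s' ∈ S, sympl s s' = 0)
    (hdim : Module.finrank (ZMod 2) S = n)
    (φ : (Fin n → ZMod 2) → ℂ) (hφ : φ ≠ 0)
    (ε : S → ℂ) (hε : ∀ s : S, (PauliV (s : Fin n → ZMod 2 × ZMod 2)).mulVec φ = ε s • φ) :
    ∀ v ∉ S, ∑ x, star (φ x) * (PauliV v).mulVec φ x = 0 := by
  intro v hv
  obtain ⟨s, hs, hsv⟩ := exists_sympl_eq_one_of_not_mem S hiso hdim hv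
  have hanti : PauliV s * PauliV v = -(PauliV v * PauliV s) := by
    rw [pauliV_mul_pauliV_comm, hsv, signChar_one, neg_one_smul]
  exact star_dotProduct_mulVec_eq_zero_of_anticommute (conjTranspose_pauliV_mul_self s) hanti
    hφ (hε ⟨s, hs⟩)
end
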